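/- Existence for the learning problem with linear state equation (Proposition 6.1): Assume (L1) and (L2). Then the learning problem (LP_lin) has a solution: there exist α* ∈ [α̲,ᾱ] and (y*,u*) with Ay* = Bu* minimizing J_{α*,y_δ} over {(y,u) ∈ Y × U : Ay = Bu}, such that ‖u* − u†‖²_Ũ ≤ ‖u_α − u†‖²_Ũ for every α ∈ [α̲,ᾱ] and every minimizer (y_α,u_α) of J_{α,y_δ} over {(y,u) : Ay = Bu}. -/

import Mathlib

/-!
By (L1) the state equation `Ay = Bu` is the graph `y = T u` of the bounded operator `T = A⁻¹B`,
so the lower level problem minimises over `U` a quadratic functional with quadratic part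
`a_α(u, u) = ‖ιY T u‖² + Σ αᵢ ‖Kᵢ u‖²`, coercive by (L2) uniformly in `α ≥ α̲`. Its unique
minimiser `u_α` is the solution of the normal equation `a_α(u_α, ·) = ⟪ȳ, ιY T ·⟫`, `ȳ` the mean
of the data; a solution is obtained by projecting `(ȳ, 0)` onto the closed range of
`u ↦ (ιY T u, (√αᵢ Kᵢ u)ᵢ)`. Comparing the normal equations for two parameters shows that
`α ↦ u_α` is Lipschitz, so `α ↦ ‖u_α - u†‖²` attains its minimum on the compact box `[α̲, ᾱ]`.
-/

open Filter Topology
open scoped RealInnerProductSpace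

/-- The Tikhonov functional of the lower level problem of `(LP_lin)`, with penalties
`Ψᵢ(u) = ½‖Kᵢu‖²`. -/
noncomputable def Jlin {Y U Ytil : Type*} [NormedAddCommGroup Y] [NormedSpace ℝ Y]
    [NormedAddCommGroup U] [NormedSpace ℝ U]
    [NormedAddCommGroup Ytil] [InnerProductSpace ℝ Ytil]
    {m r : ℕ} {E : Fin r → Type*} [∀ i, NormedAddCommGroup (E i)]
    [∀ i, InnerProductSpace ℝ (E i)]
    (ιY : Y →L[ℝ] Ytil) (K : (i : Fin r) → U →L[ℝ] E i)
    (α : Fin r → ℝ) (yδ : Fin m → Ytil) (p : Y × U) : ℝ :=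
  (1 / (2 * (m : ℝ))) * ∑ j, ‖ιY p.1 - yδ j‖ ^ 2 + ∑ i, (α i / 2) * ‖K i p.2‖ ^ 2

/-- `p = (y,u)` solves the lower level problem of `(LP_lin)` with the linear state
equation `Ay = Bu`. -/
def SolvesLin {Y U Ytil Z : Type*} [NormedAddCommGroup Y] [NormedSpace ℝ Y]
    [NormedAddCommGroup U] [NormedSpace ℝ U]
    [NormedAddCommGroup Ytil] [InnerProductSpace ℝ Ytil]
    [NormedAddCommGroup Z] [NormedSpace ℝ Z]
    {m r : ℕ} {E : Fin r → Type*} [∀ i, NormedAddCommGroup (E i)]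
    [∀ i, InnerProductSpace ℝ (E i)]
    (A : Y →L[ℝ] Z) (B : U →L[ℝ] Z)
    (ιY : Y →L[ℝ] Ytil) (K : (i : Fin r) → U →L[ℝ] E i)
    (α : Fin r → ℝ) (yδ : Fin m → Ytil) (p : Y × U) : Prop :=
  A p.1 = B p.2 ∧ ∀ q : Y × U, A q.1 = B q.2 → Jlin ιY K α yδ p ≤ Jlin ιY K α yδ q

section SampleMean

variable {H : Type*} [NormedAddCommGroup H] [InnerProductSpace ℝ H] {m : ℕ}

noncomputable def sampleMean (y : Fin m → H) : H := (m : ℝ)⁻¹ • ∑ j, y j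

lemma one_div_two_mul_sum_norm_sub_sq (hm : 0 < m) (y : Fin m → H) (x : H) :
    1 / (2 * (m : ℝ)) * ∑ j, ‖x - y j‖ ^ 2 =
      ‖x‖ ^ 2 / 2 - ⟪sampleMean y, x⟫ + 1 / (2 * (m : ℝ)) * ∑ j, ‖y j‖ ^ 2 := by
  simp only [norm_sub_sq_real, Finset.sum_add_distrib, Finset.sum_sub_distrib, Finset.sum_const,
    Finset.card_univ, Fintype.card_fin, nsmul_eq_mul, sampleMean, real_inner_smul_right,
    inner_sum, ← Finset.mul_sum, real_inner_comm x]
  field_simp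

end SampleMean

section Antilipschitz

variable {U H : Type*} [NormedAddCommGroup U] [NormedSpace ℝ U]
  [NormedAddCommGroup H] [InnerProductSpace ℝ H]

lemma ContinuousLinearMap.antilipschitz_of_mul_sq_le (Φ : U →L[ℝ] H) {c : ℝ} (hc : 0 < c)
    (h : ∀ u, c * ‖u‖ ^ 2 ≤ ‖Φ u‖ ^ 2) : AntilipschitzWith (Real.sqrt c)⁻¹.toNNReal Φ := by
  refine Φ.antilipschitz_of_bound fun u => ?_
  have hsqrt : 0 < Real.sqrt c := Real.sqrt_pos.mpr hc
  have : Real.sqrt c * ‖u‖ ≤ ‖Φ u‖ := by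
    refine (pow_le_pow_iff_left₀ (by positivity) (norm_nonneg _) two_ne_zero).mp ?_
    rw [mul_pow, Real.sq_sqrt hc.le]
    exact h u
  rw [Real.coe_toNNReal _ (by positivity), inv_mul_eq_div, le_div_iff₀ hsqrt]
  linarith

lemma exists_forall_inner_eq_of_antilipschitz [CompleteSpace U] (Φ : U →L[ℝ] H) {k : NNReal}
    (hΦ : AntilipschitzWith k Φ) (z : H) : ∃ u, ∀ v, ⟪Φ u, Φ v⟫ = ⟪z, Φ v⟫ := by
  set V := LinearMap.range (Φ : U →ₗ[ℝ] H)
  have : CompleteSpace V :=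
    ((hΦ.isUniformInducing Φ.uniformContinuous).isComplete_range).completeSpace_coe
  obtain ⟨u, hu⟩ : V.starProjection z ∈ V := V.starProjection_apply_mem z
  refine ⟨u, fun v => ?_⟩
  have horth := V.starProjection_inner_eq_zero z (Φ v) ⟨v, rfl⟩
  rw [inner_sub_left, sub_eq_zero] at horth
  rw [horth, ← hu]
  rfl

end Antilipschitz

section TikhonovForm

variable {U H : Type*} [NormedAddCommGroup U] [NormedSpace ℝ U]
  [NormedAddCommGroup H] [InnerProductSpace ℝ H]
  {m r : ℕ} {E : Fin r → Type*} [∀ i, NormedAddCommGroup (E i)] [∀ i, InnerProductSpace ℝ (E i)]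
  (G : U →L[ℝ] H) (K : (i : Fin r) → U →L[ℝ] E i) (α : Fin r → ℝ) (yδ : Fin m → H)

def tikhonovForm (u v : U) : ℝ := ⟪G u, G v⟫ + ∑ i, α i * ⟪K i u, K i v⟫

def SolvesNormalEq (z : H) (u : U) : Prop := ∀ v, tikhonovForm G K α u v = ⟪z, G v⟫

/-- The functional `Jlin` on the graph `y = T u` of the control-to-state map, with `G = ιY ∘ T`. -/
noncomputable def reducedJlin (u : U) : ℝ :=
  1 / (2 * (m : ℝ)) * ∑ j, ‖G u - yδ j‖ ^ 2 + ∑ i, (α i / 2) * ‖K i u‖ ^ 2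

lemma tikhonovForm_comm (u v : U) : tikhonovForm G K α u v = tikhonovForm G K α v u := by
  simp only [tikhonovForm, real_inner_comm]

lemma tikhonovForm_sub_left (u w v : U) :
    tikhonovForm G K α (u - w) v = tikhonovForm G K α u v - tikhonovForm G K α w v := by
  simp only [tikhonovForm, map_sub, inner_sub_left, mul_sub, Finset.sum_sub_distrib]
  ring

lemma tikhonovForm_self (u : U) :
    tikhonovForm G K α u u = ‖G u‖ ^ 2 + ∑ i, α i * ‖K i u‖ ^ 2 := by
  simp only [tikhonovForm, real_inner_self_eq_norm_sq]

lemma tikhonovForm_sub_tikhonovForm (β : Fin r → ℝ) (u v : U) :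
    tikhonovForm G K β u v - tikhonovForm G K α u v = ∑ i, (β i - α i) * ⟪K i u, K i v⟫ := by
  simp only [tikhonovForm, add_sub_add_left_eq_sub, ← Finset.sum_sub_distrib, sub_mul]

lemma tikhonovForm_sub_tikhonovForm_le (β : Fin r → ℝ) (u v : U) :
    tikhonovForm G K β u v - tikhonovForm G K α u v ≤
      dist α β * (∑ i, ‖K i‖ ^ 2) * ‖u‖ * ‖v‖ := by
  rw [tikhonovForm_sub_tikhonovForm, Finset.mul_sum, Finset.sum_mul, Finset.sum_mul]
  refine Finset.sum_le_sum fun i _ => ?_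
  have hαβ : |β i - α i| ≤ dist α β := by
    rw [← Real.dist_eq, dist_comm]
    exact dist_le_pi_dist α β i
  have hK : |⟪K i u, K i v⟫| ≤ ‖K i‖ ^ 2 * ‖u‖ * ‖v‖ := calc
    |⟪K i u, K i v⟫| ≤ ‖K i u‖ * ‖K i v‖ := abs_real_inner_le_norm _ _
    _ ≤ (‖K i‖ * ‖u‖) * (‖K i‖ * ‖v‖) :=
      mul_le_mul ((K i).le_opNorm u) ((K i).le_opNorm v) (norm_nonneg _) (by positivity)
    _ = ‖K i‖ ^ 2 * ‖u‖ * ‖v‖ := by ring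
  calc (β i - α i) * ⟪K i u, K i v⟫ ≤ |β i - α i| * |⟪K i u, K i v⟫| :=
        (le_abs_self _).trans_eq (abs_mul _ _)
    _ ≤ dist α β * (‖K i‖ ^ 2 * ‖u‖ * ‖v‖) :=
        mul_le_mul hαβ hK (abs_nonneg _) dist_nonneg
    _ = dist α β * ‖K i‖ ^ 2 * ‖u‖ * ‖v‖ := by ring

lemma reducedJlin_eq (hm : 0 < m) (u : U) :
    reducedJlin G K α yδ u = tikhonovForm G K α u u / 2 - ⟪sampleMean yδ, G u⟫
      + 1 / (2 * (m : ℝ)) * ∑ j, ‖yδ j‖ ^ 2 := by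
  rw [reducedJlin, one_div_two_mul_sum_norm_sub_sq hm, tikhonovForm_self, add_div,
    Finset.sum_div]
  simp only [div_mul_eq_mul_div]
  ring

variable {G K α yδ}

lemma reducedJlin_eq_add_of_solvesNormalEq (hm : 0 < m) {u₀ : U}
    (h₀ : SolvesNormalEq G K α (sampleMean yδ) u₀) (u : U) :
    reducedJlin G K α yδ u =
      reducedJlin G K α yδ u₀ + tikhonovForm G K α (u - u₀) (u - u₀) / 2 := by
  have hsq : tikhonovForm G K α (u - u₀) (u - u₀) =
      tikhonovForm G K α u u - 2 * tikhonovForm G K α u₀ u + tikhonovForm G K α u₀ u₀ := by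
    rw [tikhonovForm_sub_left, tikhonovForm_comm G K α u, tikhonovForm_comm G K α u₀,
      tikhonovForm_sub_left, tikhonovForm_sub_left, tikhonovForm_comm G K α u₀ u]
    ring
  rw [reducedJlin_eq G K α yδ hm, reducedJlin_eq G K α yδ hm, hsq, h₀ u, h₀ u₀]
  ring

end TikhonovForm

lemma le_div_of_mul_sq_le {c x B : ℝ} (hc : 0 < c) (hB : 0 ≤ B) (h : c * x ^ 2 ≤ B * x) :
    x ≤ B / c := by
  rw [le_div_iff₀ hc]
  nlinarith

section Coercive

variable {U H : Type*} [NormedAddCommGroup U] [NormedSpace ℝ U]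
  [NormedAddCommGroup H] [InnerProductSpace ℝ H]
  {m r : ℕ} {E : Fin r → Type*} [∀ i, NormedAddCommGroup (E i)] [∀ i, InnerProductSpace ℝ (E i)]
  {G : U →L[ℝ] H} {K : (i : Fin r) → U →L[ℝ] E i} {α : Fin r → ℝ} {c : ℝ}

variable (G K α) in
/-- `u ↦ (G u, (√αᵢ Kᵢ u)ᵢ)`, which pulls the inner product back to `tikhonovForm`. -/
noncomputable def tikhonovEmbedding : U →L[ℝ] WithLp 2 (H × PiLp 2 E) :=
  (WithLp.prodContinuousLinearEquiv 2 ℝ H (PiLp 2 E)).symm.toContinuousLinearMap ∘L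
    G.prod ((PiLp.continuousLinearEquiv 2 ℝ E).symm.toContinuousLinearMap ∘L
      ContinuousLinearMap.pi fun i => Real.sqrt (α i) • K i)

lemma inner_tikhonovEmbedding (hα : ∀ i, 0 ≤ α i) (u v : U) :
    ⟪tikhonovEmbedding G K α u, tikhonovEmbedding G K α v⟫ = tikhonovForm G K α u v := by
  rw [WithLp.prod_inner_apply, PiLp.inner_apply, tikhonovForm]
  congr 1
  refine Finset.sum_congr rfl fun i _ => ?_
  change ⟪Real.sqrt (α i) • K i u, Real.sqrt (α i) • K i v⟫ = _
  rw [real_inner_smul_left, real_inner_smul_right, ← mul_assoc, Real.mul_self_sqrt (hα i)]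

lemma inner_toLp_zero_tikhonovEmbedding (z : H) (v : U) :
    ⟪WithLp.toLp 2 (z, (0 : PiLp 2 E)), tikhonovEmbedding G K α v⟫ = ⟪z, G v⟫ := by
  rw [WithLp.prod_inner_apply, inner_zero_left, add_zero]
  rfl

lemma exists_solvesNormalEq [CompleteSpace U] (hα : ∀ i, 0 ≤ α i) (hc : 0 < c)
    (hcoer : ∀ u, c * ‖u‖ ^ 2 ≤ tikhonovForm G K α u u) (z : H) :
    ∃ u, SolvesNormalEq G K α z u := by
  set Φ := tikhonovEmbedding G K α
  have hΦ : ∀ u, c * ‖u‖ ^ 2 ≤ ‖Φ u‖ ^ 2 := fun u => by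
    rw [← real_inner_self_eq_norm_sq (Φ u), inner_tikhonovEmbedding hα]
    exact hcoer u
  obtain ⟨u, hu⟩ := exists_forall_inner_eq_of_antilipschitz Φ
    (Φ.antilipschitz_of_mul_sq_le hc hΦ) (WithLp.toLp 2 (z, 0))
  refine ⟨u, fun v => ?_⟩
  rw [← inner_tikhonovEmbedding hα, hu, inner_toLp_zero_tikhonovEmbedding]

lemma forall_reducedJlin_le_iff {yδ : Fin m → H} (hm : 0 < m) (hc : 0 < c)
    (hcoer : ∀ u, c * ‖u‖ ^ 2 ≤ tikhonovForm G K α u u) {u₀ : U}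
    (h₀ : SolvesNormalEq G K α (sampleMean yδ) u₀) (u : U) :
    (∀ v, reducedJlin G K α yδ u ≤ reducedJlin G K α yδ v) ↔ u = u₀ := by
  constructor
  · intro hu
    by_contra hne
    have hpos : 0 < c * ‖u - u₀‖ ^ 2 := by
      have := norm_pos_iff.mpr (sub_ne_zero.mpr hne)
      positivity
    have hle := hu u₀
    rw [reducedJlin_eq_add_of_solvesNormalEq hm h₀ u] at hle
    linarith [hcoer (u - u₀)]
  · rintro rfl v
    rw [reducedJlin_eq_add_of_solvesNormalEq hm h₀ v]
    linarith [hcoer (v - u), mul_nonneg hc.le (sq_nonneg ‖v - u‖)]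

lemma norm_le_of_solvesNormalEq (hc : 0 < c)
    (hcoer : ∀ u, c * ‖u‖ ^ 2 ≤ tikhonovForm G K α u u) {z : H} {u : U}
    (hu : SolvesNormalEq G K α z u) : ‖u‖ ≤ ‖z‖ * ‖G‖ / c := by
  refine le_div_of_mul_sq_le hc (by positivity) ?_
  calc c * ‖u‖ ^ 2 ≤ ⟪z, G u⟫ := (hcoer u).trans_eq (hu u)
    _ ≤ ‖z‖ * (‖G‖ * ‖u‖) :=
      (real_inner_le_norm _ _).trans (mul_le_mul_of_nonneg_left (G.le_opNorm u) (norm_nonneg _))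
    _ = ‖z‖ * ‖G‖ * ‖u‖ := by ring

/-- Testing both normal equations with `u - w` leaves only the difference of the two forms,
which is linear in `β - α`. -/
lemma norm_sub_le_of_solvesNormalEq (hc : 0 < c)
    (hcoer : ∀ u, c * ‖u‖ ^ 2 ≤ tikhonovForm G K α u u) {β : Fin r → ℝ} {z : H} {u w : U}
    (hu : SolvesNormalEq G K α z u) (hw : SolvesNormalEq G K β z w) :
    ‖u - w‖ ≤ dist α β * (∑ i, ‖K i‖ ^ 2) * ‖w‖ / c := by
  refine le_div_of_mul_sq_le hc (by positivity) ?_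
  calc c * ‖u - w‖ ^ 2 ≤ tikhonovForm G K α (u - w) (u - w) := hcoer (u - w)
    _ = tikhonovForm G K β w (u - w) - tikhonovForm G K α w (u - w) := by
      rw [tikhonovForm_sub_left, hu, hw]
    _ ≤ dist α β * (∑ i, ‖K i‖ ^ 2) * ‖w‖ * ‖u - w‖ :=
      tikhonovForm_sub_tikhonovForm_le G K α β w (u - w)

lemma continuous_of_solvesNormalEq {S : Set (Fin r → ℝ)} (hc : 0 < c)
    (hcoer : ∀ α ∈ S, ∀ u, c * ‖u‖ ^ 2 ≤ tikhonovForm G K α u u) {z : H} {sol : S → U}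
    (hsol : ∀ α : S, SolvesNormalEq G K α z (sol α)) : Continuous sol := by
  refine (LipschitzWith.of_dist_le' (K := (∑ i, ‖K i‖ ^ 2) * (‖z‖ * ‖G‖ / c) / c)
    fun α β => ?_).continuous
  have hbound := norm_le_of_solvesNormalEq hc (hcoer β β.2) (hsol β)
  rw [dist_eq_norm, Subtype.dist_eq]
  calc ‖sol α - sol β‖ ≤ dist α.1 β.1 * (∑ i, ‖K i‖ ^ 2) * ‖sol β‖ / c :=
        norm_sub_le_of_solvesNormalEq hc (hcoer α α.2) (hsol α) (hsol β)
    _ ≤ dist α.1 β.1 * (∑ i, ‖K i‖ ^ 2) * (‖z‖ * ‖G‖ / c) / c := by gcongr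
    _ = _ := by ring

variable (G) in
lemma exists_pos_mul_sq_le_tikhonovForm {αlo : Fin r → ℝ} (hαlo : ∀ i, 0 < αlo i)
    (hK : ∃ ζ > 0, ∀ u, ζ * ‖u‖ ^ 2 ≤ ∑ i, ‖K i u‖ ^ 2) :
    ∃ c > 0, ∀ α, αlo ≤ α → ∀ u, c * ‖u‖ ^ 2 ≤ tikhonovForm G K α u u := by
  obtain ⟨ζ, hζ, hKζ⟩ := hK
  obtain ⟨a, hale, ha⟩ : ∃ a, (∀ i, a ≤ αlo i) ∧ 0 < a :=
    ((eventually_all.mpr fun i => eventually_le_nhds (hαlo i)).filter_mono nhdsWithin_le_nhds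
      |>.and (self_mem_nhdsWithin (s := Set.Ioi 0))).exists
  refine ⟨a * ζ, mul_pos ha hζ, fun α hα u => ?_⟩
  calc a * ζ * ‖u‖ ^ 2 ≤ ∑ i, a * ‖K i u‖ ^ 2 := by
        rw [mul_assoc, ← Finset.mul_sum]
        exact mul_le_mul_of_nonneg_left (hKζ u) ha.le
    _ ≤ ∑ i, α i * ‖K i u‖ ^ 2 :=
        Finset.sum_le_sum fun i _ => by gcongr; exact (hale i).trans (hα i)
    _ ≤ tikhonovForm G K α u u := by
        rw [tikhonovForm_self]
        exact le_add_of_nonneg_left (sq_nonneg _)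

end Coercive

section StateEquation

variable {Y U Ytil Z : Type*} [NormedAddCommGroup Y] [NormedSpace ℝ Y]
  [NormedAddCommGroup U] [NormedSpace ℝ U] [NormedAddCommGroup Ytil] [InnerProductSpace ℝ Ytil]
  [NormedAddCommGroup Z] [NormedSpace ℝ Z]
  {m r : ℕ} {E : Fin r → Type*} [∀ i, NormedAddCommGroup (E i)] [∀ i, InnerProductSpace ℝ (E i)]
  {A : Y →L[ℝ] Z} {B : U →L[ℝ] Z} {T : U →L[ℝ] Y} {ιY : Y →L[ℝ] Ytil}
  {K : (i : Fin r) → U →L[ℝ] E i} {α : Fin r → ℝ} {yδ : Fin m → Ytil} {c : ℝ}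

lemma solvesLin_iff (hA : Function.Injective A) (hT : ∀ u, A (T u) = B u) (hm : 0 < m)
    (hc : 0 < c) (hcoer : ∀ u, c * ‖u‖ ^ 2 ≤ tikhonovForm (ιY ∘L T) K α u u) {u₀ : U}
    (h₀ : SolvesNormalEq (ιY ∘L T) K α (sampleMean yδ) u₀) (q : Y × U) :
    SolvesLin A B ιY K α yδ q ↔ q = (T u₀, u₀) := by
  obtain ⟨y, u⟩ := q
  have hstate : ∀ {y u}, A y = B u ↔ y = T u := by
    intro y u
    rw [← hT, hA.eq_iff]
  have hmin : (∀ p : Y × U, p.1 = T p.2 → Jlin ιY K α yδ (T u, u) ≤ Jlin ιY K α yδ p) ↔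
      u = u₀ := by
    rw [← forall_reducedJlin_le_iff hm hc hcoer h₀ u]
    refine ⟨fun h v => h (T v, v) rfl, ?_⟩
    rintro h ⟨y', v⟩ (hv : y' = T v)
    subst hv
    exact h v
  simp only [SolvesLin, hstate, Prod.mk.injEq]
  constructor
  · rintro ⟨rfl, h⟩
    obtain rfl := hmin.1 h
    exact ⟨rfl, rfl⟩
  · rintro ⟨rfl, rfl⟩
    exact ⟨rfl, hmin.2 rfl⟩

end StateEquation

variable {Y U Util Ytil Z : Type*}
  [NormedAddCommGroup Y] [NormedSpace ℝ Y] [CompleteSpace Y]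
  [NormedAddCommGroup U] [NormedSpace ℝ U] [CompleteSpace U]
  [NormedAddCommGroup Util] [InnerProductSpace ℝ Util] [CompleteSpace Util]
  [NormedAddCommGroup Ytil] [InnerProductSpace ℝ Ytil] [CompleteSpace Ytil]
  [NormedAddCommGroup Z] [NormedSpace ℝ Z] [CompleteSpace Z]

theorem linear_learning_problem_has_solution_general
    {m r : ℕ} (hm : 0 < m)
    {E : Fin r → Type*} [∀ i, NormedAddCommGroup (E i)]
    [∀ i, InnerProductSpace ℝ (E i)]
    (ιY : Y →L[ℝ] Ytil)
    (ιU : U →L[ℝ] Util)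
    (A : Y →L[ℝ] Z) (B : U →L[ℝ] Z) (K : (i : Fin r) → U →L[ℝ] E i)
    (udag : Util) (yδ : Fin m → Ytil)
    (αlo αhi : Fin r → ℝ) (hαpos : ∀ i, 0 < αlo i) (hαle : ∀ i, αlo i ≤ αhi i)
    (hL1 : Function.Bijective A)
    (hL2 : ∃ ζ > (0 : ℝ), ∀ u : U, ζ * ‖u‖ ^ 2 ≤ ∑ i, ‖K i u‖ ^ 2) :
    ∃ αstar : Fin r → ℝ, (∀ i, αlo i ≤ αstar i ∧ αstar i ≤ αhi i) ∧
      ∃ p : Y × U, SolvesLin A B ιY K αstar yδ p ∧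
        ∀ α : Fin r → ℝ, (∀ i, αlo i ≤ α i ∧ α i ≤ αhi i) →
          ∀ q : Y × U, SolvesLin A B ιY K α yδ q →
            ‖ιU p.2 - udag‖ ^ 2 ≤ ‖ιU q.2 - udag‖ ^ 2 := by
  obtain ⟨T, hT⟩ : ∃ T : U →L[ℝ] Y, ∀ u, A (T u) = B u := by
    let A' := ContinuousLinearEquiv.ofBijective A (LinearMap.ker_eq_bot.mpr hL1.1)
      (LinearMap.range_eq_top.mpr hL1.2)
    exact ⟨A'.symm ∘L B, fun u => A'.apply_symm_apply (B u)⟩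
  obtain ⟨c, hc, hcoer⟩ := exists_pos_mul_sq_le_tikhonovForm (ιY ∘L T) hαpos hL2
  set box := Set.Icc αlo αhi
  have mem_box (α : Fin r → ℝ) : α ∈ box ↔ ∀ i, αlo i ≤ α i ∧ α i ≤ αhi i := by
    simp only [box, Set.mem_Icc, Pi.le_def, forall_and]
  choose sol hsol using fun α : box => exists_solvesNormalEq
    (fun i => (hαpos i).le.trans (α.2.1 i)) hc (hcoer α α.2.1) (sampleMean yδ)
  have hsolves (α : box) (q : Y × U) :=
    solvesLin_iff hL1.1 hT hm hc (hcoer α α.2.1) (hsol α) q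
  have hsol_cont : Continuous sol :=
    continuous_of_solvesNormalEq hc (fun α hα => hcoer α hα.1) hsol
  have : Nonempty box := ⟨⟨αlo, le_rfl, hαle⟩⟩
  obtain ⟨αstar, -, hαstar⟩ := isCompact_univ.exists_isMinOn Set.univ_nonempty
    (f := fun α => ‖ιU (sol α) - udag‖ ^ 2) (by fun_prop)
  refine ⟨αstar, (mem_box αstar).1 αstar.2, (T (sol αstar), sol αstar),
    (hsolves αstar _).2 rfl, fun α hα q hq => ?_⟩
  rw [(hsolves ⟨α, (mem_box α).2 hα⟩ q).1 hq]
  exact hαstar (Set.mem_univ _)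

/-- **Proposition 6.1** (existence for the learning problem with linear state
equation): under (L1) and (L2), the learning problem `(LP_lin)` has a solution. -/
theorem linear_learning_problem_has_solution
    (hYrefl : Function.Surjective (NormedSpace.inclusionInDoubleDual ℝ Y))
    (hUrefl : Function.Surjective (NormedSpace.inclusionInDoubleDual ℝ U))
    {m r : ℕ} (hm : 0 < m) (hr : 0 < r)
    {E : Fin r → Type*} [∀ i, NormedAddCommGroup (E i)]
    [∀ i, InnerProductSpace ℝ (E i)] [∀ i, CompleteSpace (E i)]
    (ιY : Y →L[ℝ] Ytil) (hιY : Function.Injective ιY)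
    (ιU : U →L[ℝ] Util) (hιU : Function.Injective ιU)
    (A : Y →L[ℝ] Z) (B : U →L[ℝ] Z) (K : (i : Fin r) → U →L[ℝ] E i)
    (udag : Util) (yδ : Fin m → Ytil)
    (αlo αhi : Fin r → ℝ) (hαpos : ∀ i, 0 < αlo i) (hαle : ∀ i, αlo i ≤ αhi i)
    (hL1 : Function.Bijective A)
    (hL2 : ∃ ζ > (0 : ℝ), ∀ u : U, ζ * ‖u‖ ^ 2 ≤ ∑ i, ‖K i u‖ ^ 2) :
    ∃ αstar : Fin r → ℝ, (∀ i, αlo i ≤ αstar i ∧ αstar i ≤ αhi i) ∧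
      ∃ p : Y × U, SolvesLin A B ιY K αstar yδ p ∧
        ∀ α : Fin r → ℝ, (∀ i, αlo i ≤ α i ∧ α i ≤ αhi i) →
          ∀ q : Y × U, SolvesLin A B ιY K α yδ q →
            ‖ιU p.2 - udag‖ ^ 2 ≤ ‖ιU q.2 - udag‖ ^ 2 :=
  linear_learning_problem_has_solution_general hm ιY ιU A B K udag yδ αlo αhi hαpos hαle hL1 hL2
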